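/- arXiv:2310.03902 — 5 statements merged into one kernel-verified Lean document; each statement's English description precedes it below -/
import Mathlib

section
/- Let p0 and p1 be strictly positive probability densities on ℝ^D and let w : ℝ^D → [0,∞) be measurable with 0 < ∫ w(x) p1(x) dx < ∞. Then (∫ w(x) p1(x) dx)^2 ≤ (∫ w(x)^2 · p1(x)(p0(x)+p1(x))/p0(x) dx) · (∫ p0(x)p1(x)/(p0(x)+p1(x)) dx), and equality holds for the harmonic weighting w(x) = p0(x)/(p0(x)+p1(x)). (This is the core inequality behind Theorem 1's claim that the NCE loss minimizes the asymptotic estimation error among all Bregman classification losses in the binary case K = 1.) -/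
/-! Cauchy–Schwarz with respect to the harmonic weight `v = p0 p1 / (p0 + p1)`: writing
`w p1 = (w p1 / √v) · √v` gives `(∫ w p1)² ≤ (∫ (w p1)² / v) (∫ v)`, and `(w p1)² / v` is exactly
`w² p1 (p0 + p1) / p0`. For the harmonic weighting `w p1 = v`, so all three integrals coincide. -/

open MeasureTheory

open scoped ENNReal

section CauchySchwarz

variable {α : Type*} [MeasurableSpace α] {μ : Measure α}

theorem ENNReal.sq_lintegral_mul_rpow_half_le {f g : α → ℝ≥0∞} (hf : AEMeasurable f μ)
    (hg : AEMeasurable g μ) :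
    (∫⁻ a, (f a * g a) ^ (1 / 2 : ℝ) ∂μ) ^ 2 ≤ (∫⁻ a, f a ∂μ) * ∫⁻ a, g a ∂μ := by
  have holder := ENNReal.lintegral_mul_norm_pow_le hf hg (p := 1 / 2) (q := 1 / 2)
    (by norm_num) (by norm_num) (by norm_num)
  simp_rw [← ENNReal.mul_rpow_of_nonneg _ _ (by norm_num : (0 : ℝ) ≤ 1 / 2)] at holder
  calc (∫⁻ a, (f a * g a) ^ (1 / 2 : ℝ) ∂μ) ^ 2
      ≤ (((∫⁻ a, f a ∂μ) * ∫⁻ a, g a ∂μ) ^ (1 / 2 : ℝ)) ^ 2 := pow_le_pow_left' holder 2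
    _ = (∫⁻ a, f a ∂μ) * ∫⁻ a, g a ∂μ := by
      rw [← ENNReal.rpow_natCast, ← ENNReal.rpow_mul]
      norm_num

theorem sq_lintegral_ofReal_le_lintegral_sq_div_mul {u v : α → ℝ} (hu : AEMeasurable u μ)
    (hv : AEMeasurable v μ) (hv_pos : ∀ a, 0 < v a) :
    (∫⁻ a, ENNReal.ofReal (u a) ∂μ) ^ 2 ≤
      (∫⁻ a, ENNReal.ofReal (u a ^ 2 / v a) ∂μ) * ∫⁻ a, ENNReal.ofReal (v a) ∂μ := by
  refine le_trans ?_ (ENNReal.sq_lintegral_mul_rpow_half_le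
    ((hu.pow_const 2).div hv).ennreal_ofReal hv.ennreal_ofReal)
  gcongr with a
  have hsq : u a ^ 2 / v a * v a = |u a| ^ 2 := by
    rw [div_mul_cancel₀ _ (hv_pos a).ne', sq_abs]
  rw [← ENNReal.ofReal_mul (div_nonneg (sq_nonneg _) (hv_pos a).le), hsq,
    ENNReal.ofReal_rpow_of_nonneg (sq_nonneg _) (by norm_num), ← Real.sqrt_eq_rpow,
    Real.sqrt_sq (abs_nonneg _)]
  exact ENNReal.ofReal_le_ofReal (le_abs_self _)

end CauchySchwarz

theorem annealed_bregman_nce_optimality_core_general {D : ℕ}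
    (p0 p1 w : EuclideanSpace ℝ (Fin D) → ℝ)
    (hp0m : Measurable p0) (hp1m : Measurable p1)
    (hp0pos : ∀ x, 0 < p0 x) (hp1pos : ∀ x, 0 < p1 x)
    (hwm : Measurable w) :
    (∫⁻ x, ENNReal.ofReal (w x * p1 x)) ^ 2 ≤
        (∫⁻ x, ENNReal.ofReal (w x ^ 2 * p1 x * (p0 x + p1 x) / p0 x)) *
          (∫⁻ x, ENNReal.ofReal (p0 x * p1 x / (p0 x + p1 x))) ∧
      ((∀ x, w x = p0 x / (p0 x + p1 x)) →
        (∫⁻ x, ENNReal.ofReal (w x * p1 x)) ^ 2 =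
          (∫⁻ x, ENNReal.ofReal (w x ^ 2 * p1 x * (p0 x + p1 x) / p0 x)) *
            (∫⁻ x, ENNReal.ofReal (p0 x * p1 x / (p0 x + p1 x)))) := by
  have hp0 x := (hp0pos x).ne'
  have hsum x := (add_pos (hp0pos x) (hp1pos x)).ne'
  have hsq_div_weight x : (w x * p1 x) ^ 2 / (p0 x * p1 x / (p0 x + p1 x)) =
      w x ^ 2 * p1 x * (p0 x + p1 x) / p0 x := by
    field_simp [hp0 x, (hp1pos x).ne', hsum x]
  constructor
  · simpa only [hsq_div_weight] using sq_lintegral_ofReal_le_lintegral_sq_div_mul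
      (u := fun x => w x * p1 x) (v := fun x => p0 x * p1 x / (p0 x + p1 x))
      (by fun_prop) (by fun_prop)
      fun x => div_pos (mul_pos (hp0pos x) (hp1pos x)) (add_pos (hp0pos x) (hp1pos x))
  · intro hw
    have hsecond_moment x : w x ^ 2 * p1 x * (p0 x + p1 x) / p0 x = w x * p1 x := by
      rw [hw x]; field_simp [hp0 x, hsum x]
    have hharmonic x : p0 x * p1 x / (p0 x + p1 x) = w x * p1 x := by
      rw [hw x]; field_simp [hsum x]
    simp only [hsecond_moment, hharmonic]
    exact sq _

/-- Core inequality behind Theorem 1 (optimality of the NCE loss in the binary case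
`K = 1`): for strictly positive probability densities `p0, p1` on `ℝ^D` and a
measurable nonnegative weighting `w` with `0 < ∫ w p1 < ∞`, one has
`(∫ w p1)² ≤ (∫ w² p1 (p0 + p1)/p0) · (∫ p0 p1/(p0 + p1))`,
with equality for the harmonic weighting `w = p0/(p0 + p1)`. -/
theorem annealed_bregman_nce_optimality_core {D : ℕ}
    (p0 p1 w : EuclideanSpace ℝ (Fin D) → ℝ)
    (hp0m : Measurable p0) (hp1m : Measurable p1)
    (hp0pos : ∀ x, 0 < p0 x) (hp1pos : ∀ x, 0 < p1 x)
    (hp0int : ∫ x, p0 x = 1) (hp1int : ∫ x, p1 x = 1)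
    (hwm : Measurable w) (hw0 : ∀ x, 0 ≤ w x)
    (hpos : 0 < ∫⁻ x, ENNReal.ofReal (w x * p1 x))
    (hfin : ∫⁻ x, ENNReal.ofReal (w x * p1 x) < ⊤) :
    (∫⁻ x, ENNReal.ofReal (w x * p1 x)) ^ 2 ≤
        (∫⁻ x, ENNReal.ofReal (w x ^ 2 * p1 x * (p0 x + p1 x) / p0 x)) *
          (∫⁻ x, ENNReal.ofReal (p0 x * p1 x / (p0 x + p1 x))) ∧
      ((∀ x, w x = p0 x / (p0 x + p1 x)) →
        (∫⁻ x, ENNReal.ofReal (w x * p1 x)) ^ 2 =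
          (∫⁻ x, ENNReal.ofReal (w x ^ 2 * p1 x * (p0 x + p1 x) / p0 x)) *
            (∫⁻ x, ENNReal.ofReal (p0 x * p1 x / (p0 x + p1 x)))) :=
  annealed_bregman_nce_optimality_core_general p0 p1 w hp0m hp1m hp0pos hp1pos hwm
end

section
/- Let Z > 0 and define w̃ : [0,1] → [0,1] by w̃(t) = tZ / ((1−t) + tZ). Then w̃ is differentiable with w̃′(t) = Z / ((1−t) + tZ)² for all t ∈ [0,1], and ∫₀¹ w̃′(t)² dt = (Z² + Z + 1)/(3Z) = (1/3)(Z⁻¹ + 1 + Z). -/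
/-! Along `[0,1]` the denominator `d(t) = (1 - t) + tZ` is affine with slope `Z - 1`, and
`t (d² + d + 1) / (3 d³)` is a primitive of `1 / d⁴` with no case split at `Z = 1`: since
`d - 1 = t (Z - 1)`, it equals `(1 - d⁻³) / (3 (Z - 1))` whenever `Z ≠ 1`. Evaluating at `t = 1`,
where `d = Z`, gives `∫₀¹ Z² / d⁴ = (Z² + Z + 1) / (3Z)`. -/

lemma one_sub_add_mul_pos {Z t : ℝ} (hZ : 0 < Z) (ht : t ∈ Set.Icc (0 : ℝ) 1) :
    0 < (1 - t) + t * Z := by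
  obtain ⟨h0, h1⟩ := ht
  rcases le_total Z 1 with h | h <;> nlinarith

lemma hasDerivAt_one_sub_add_mul (Z t : ℝ) :
    HasDerivAt (fun s : ℝ => (1 - s) + s * Z) (Z - 1) t :=
  (((hasDerivAt_id t).const_sub 1).add ((hasDerivAt_id t).mul_const Z)).congr_deriv (by ring)

lemma hasDerivAt_mul_div_one_sub_add_mul {Z t : ℝ} (hd : (1 - t) + t * Z ≠ 0) :
    HasDerivAt (fun s => s * Z / ((1 - s) + s * Z)) (Z / ((1 - t) + t * Z) ^ 2) t :=
  (((hasDerivAt_id' t).mul_const Z).fun_div (hasDerivAt_one_sub_add_mul Z t) hd).congr_deriv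
    (by field_simp; ring)

lemma hasDerivAt_primitive_inv_one_sub_add_mul_pow_four {Z t : ℝ} (hd : (1 - t) + t * Z ≠ 0) :
    HasDerivAt
      (fun s => s * (((1 - s) + s * Z) ^ 2 + ((1 - s) + s * Z) + 1) / (3 * ((1 - s) + s * Z) ^ 3))
      (1 / ((1 - t) + t * Z) ^ 4) t := by
  have hD := hasDerivAt_one_sub_add_mul Z t
  refine (((hasDerivAt_id' t).fun_mul (((hD.fun_pow 2).fun_add hD).add_const 1)).fun_div
    ((hD.fun_pow 3).const_mul 3) (by positivity)).congr_deriv ?_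
  field_simp
  ring

lemma integral_sq_deriv_mul_div_one_sub_add_mul {Z : ℝ} (hZ : 0 < Z) :
    ∫ t in (0 : ℝ)..1, (Z / ((1 - t) + t * Z) ^ 2) ^ 2 = (Z ^ 2 + Z + 1) / (3 * Z) := by
  have hd : ∀ t ∈ Set.uIcc (0 : ℝ) 1, (1 - t) + t * Z ≠ 0 := fun t ht =>
    (one_sub_add_mul_pos hZ (by rwa [Set.uIcc_of_le zero_le_one] at ht)).ne'
  have hprim : ∀ t ∈ Set.uIcc (0 : ℝ) 1, HasDerivAt
      (fun s => Z ^ 2 * (s * (((1 - s) + s * Z) ^ 2 + ((1 - s) + s * Z) + 1) /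
        (3 * ((1 - s) + s * Z) ^ 3)))
      ((Z / ((1 - t) + t * Z) ^ 2) ^ 2) t := fun t ht =>
    ((hasDerivAt_primitive_inv_one_sub_add_mul_pow_four (hd t ht)).const_mul (Z ^ 2)).congr_deriv
      (by rw [div_pow, ← pow_mul, mul_one_div])
  have hcont : ContinuousOn (fun t : ℝ => (Z / ((1 - t) + t * Z) ^ 2) ^ 2) (Set.uIcc 0 1) :=
    (continuousOn_const.div (by fun_prop) fun t ht => pow_ne_zero 2 (hd t ht)).pow 2
  rw [intervalIntegral.integral_eq_sub_of_hasDerivAt hprim hcont.intervalIntegrable]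
  field_simp
  ring

/-- For `Z > 0`, the vanilla arithmetic mixture weight `w̃(t) = tZ/((1−t) + tZ)`
is differentiable on `[0,1]` with `w̃′(t) = Z/((1−t) + tZ)²`, and
`∫₀¹ w̃′(t)² dt = (Z² + Z + 1)/(3Z) = (1/3)(Z⁻¹ + 1 + Z)`. -/
theorem arithmetic_weight_derivative_and_square_integral (Z : ℝ) (hZ : 0 < Z) :
    (∀ t ∈ Set.Icc (0 : ℝ) 1,
        HasDerivAt (fun s => s * Z / ((1 - s) + s * Z)) (Z / ((1 - t) + t * Z) ^ 2) t) ∧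
      (∫ t in (0 : ℝ)..1, (Z / ((1 - t) + t * Z) ^ 2) ^ 2) = (Z ^ 2 + Z + 1) / (3 * Z) ∧
      (Z ^ 2 + Z + 1) / (3 * Z) = 1 / 3 * (Z⁻¹ + 1 + Z) := by
  refine ⟨fun t ht => hasDerivAt_mul_div_one_sub_add_mul (one_sub_add_mul_pos hZ ht).ne',
    integral_sq_deriv_mul_div_one_sub_add_mul hZ, ?_⟩
  field_simp
  ring
end

section
/- (Core of Theorem 4: exponential error of annealed NCE with the vanilla arithmetic path.) Let p0 and p1 be strictly positive probability densities on ℝ^D, let Z > 0, set w̃(t) = tZ/((1−t)+tZ) and p_w(x) = (1−w)p0(x) + w p1(x). Then the Fisher–Rao path length of the reparameterized mixture path t ↦ p_{w̃(t)} satisfies ∫₀¹ w̃′(t)² (∫ (p1(x)−p0(x))²/p_{w̃(t)}(x) dx) dt ≥ (1/3)(Z⁻¹ + 1 + Z) · ∫ (p1(x)−p0(x))²/(p0(x)+p1(x)) dx. -/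
/-!
Since `w̃(t) ∈ [0, 1]`, the mixture `(1 - w̃) p0 + w̃ p1` is pointwise at most `p0 + p1`, so the
inner integral is at least `∫ (p1 - p0)² / (p0 + p1)` for every `t`. What remains is the
elementary integral `∫₀¹ w̃′(t)² dt = (Z⁻¹ + 1 + Z) / 3`.
-/

open MeasureTheory Set

lemma div_add_le_div_mixture {a b w c : ℝ} (ha : 0 < a) (hb : 0 < b) (hw0 : 0 ≤ w)
    (hw1 : w ≤ 1) (hc : 0 ≤ c) : c / (a + b) ≤ c / ((1 - w) * a + w * b) := by
  have hpos : 0 < (1 - w) * a + w * b := by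
    rcases hw0.eq_or_lt with rfl | hw0
    · simpa using ha
    · nlinarith
  exact div_le_div_of_nonneg_left hc hpos (by nlinarith)

section AnnealingWeight

variable {Z t : ℝ}

lemma annealing_denom_pos (hZ : 0 < Z) (ht : t ∈ Icc (0 : ℝ) 1) : 0 < (1 - t) + t * Z := by
  nlinarith [ht.1, ht.2, mul_nonneg ht.1 hZ.le]

lemma annealing_weight_mem_Icc (hZ : 0 < Z) (ht : t ∈ Icc (0 : ℝ) 1) :
    t * Z / ((1 - t) + t * Z) ∈ Icc (0 : ℝ) 1 := by
  have hs := annealing_denom_pos hZ ht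
  exact ⟨div_nonneg (mul_nonneg ht.1 hZ.le) hs.le, (div_le_one hs).2 (by linarith [ht.2])⟩

/-- With `s = (1 - t) + t Z`, the antiderivative `Z² (1 - s⁻³) / (3 (Z - 1))` of `Z² / s⁴`,
written via `s - 1 = t (Z - 1)` so that it stays valid at `Z = 1`. -/
lemma hasDerivAt_annealing_speed_sq_antideriv (hs : (1 - t) + t * Z ≠ 0) :
    HasDerivAt
      (fun u => Z ^ 2 * u * (((1 - u) + u * Z) ^ 2 + ((1 - u) + u * Z) + 1) /
        (3 * ((1 - u) + u * Z) ^ 3))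
      ((Z / ((1 - t) + t * Z) ^ 2) ^ 2) t := by
  have hd : HasDerivAt (fun u : ℝ => (1 - u) + u * Z) (Z - 1) t :=
    (((hasDerivAt_id t).const_sub 1).add ((hasDerivAt_id t).mul_const Z)).congr_deriv (by ring)
  have hF := (((hasDerivAt_id t).const_mul (Z ^ 2)).mul
    (((hd.pow 2).add hd).add_const 1)).div ((hd.pow 3).const_mul 3) (by simpa using hs)
  refine hF.congr_deriv ?_
  simp only [Pi.add_apply, Pi.mul_apply, Pi.pow_apply, id, Nat.cast_ofNat]
  generalize hsd : (1 - t) + t * Z = s at *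
  have hts : t * (Z - 1) = s - 1 := by rw [← hsd]; ring
  field_simp
  linear_combination (-(Z ^ 2 * s ^ 2 * (3 + 2 * s + s ^ 2))) * hts

lemma integral_annealing_speed_sq (hZ : 0 < Z) :
    ∫ t in Ioc (0 : ℝ) 1, (Z / ((1 - t) + t * Z) ^ 2) ^ 2 = 1 / 3 * (Z⁻¹ + 1 + Z) := by
  have hs : ∀ t ∈ uIcc (0 : ℝ) 1, 0 < (1 - t) + t * Z := fun t ht =>
    annealing_denom_pos hZ (by rwa [uIcc_of_le zero_le_one] at ht)
  have hcont : ContinuousOn (fun t => (Z / ((1 - t) + t * Z) ^ 2) ^ 2) (uIcc (0 : ℝ) 1) :=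
    ((continuousOn_const.div (by fun_prop)) fun t ht => pow_ne_zero _ (hs t ht).ne').pow 2
  rw [← intervalIntegral.integral_of_le zero_le_one,
    intervalIntegral.integral_eq_sub_of_hasDerivAt
      (fun t ht => hasDerivAt_annealing_speed_sq_antideriv (hs t ht).ne')
      hcont.intervalIntegrable]
  field_simp
  ring

end AnnealingWeight

theorem vanilla_arithmetic_path_exponential_error_core_general {D : ℕ}
    (p0 p1 : EuclideanSpace ℝ (Fin D) → ℝ)
    (hp0pos : ∀ x, 0 < p0 x) (hp1pos : ∀ x, 0 < p1 x)
    (Z : ℝ) (hZ : 0 < Z) :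
    ENNReal.ofReal (1 / 3 * (Z⁻¹ + 1 + Z)) *
        ∫⁻ x, ENNReal.ofReal ((p1 x - p0 x) ^ 2 / (p0 x + p1 x)) ≤
      ∫⁻ t in Set.Ioc (0 : ℝ) 1,
        ENNReal.ofReal ((Z / ((1 - t) + t * Z) ^ 2) ^ 2) *
          ∫⁻ x, ENNReal.ofReal ((p1 x - p0 x) ^ 2 /
            ((1 - t * Z / ((1 - t) + t * Z)) * p0 x + t * Z / ((1 - t) + t * Z) * p1 x)) := by
  set G : ℝ → ℝ := fun t => (Z / ((1 - t) + t * Z) ^ 2) ^ 2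
  have hGint : IntegrableOn G (Ioc (0 : ℝ) 1) := by
    refine Integrable.of_integral_ne_zero ?_
    rw [integral_annealing_speed_sq hZ]
    positivity
  rw [← integral_annealing_speed_sq hZ,
    ofReal_integral_eq_lintegral_ofReal hGint (ae_of_all _ fun t => by positivity),
    ← lintegral_mul_const'' _ (by fun_prop)]
  refine setLIntegral_mono' measurableSet_Ioc fun t ht => mul_le_mul_right
    (lintegral_mono fun x => ENNReal.ofReal_le_ofReal ?_) _
  obtain ⟨hw0, hw1⟩ := annealing_weight_mem_Icc hZ (Ioc_subset_Icc_self ht)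
  exact div_add_le_div_mixture (hp0pos x) (hp1pos x) hw0 hw1 (sq_nonneg _)

/-- Core of Theorem 4 (exponential error of annealed NCE with the vanilla
arithmetic path): the Fisher–Rao path length of the reparameterized mixture path
`t ↦ p_{w̃(t)}`, `w̃(t) = tZ/((1−t)+tZ)`, `p_w = (1−w)p0 + w p1`, is bounded below
by `(1/3)(Z⁻¹ + 1 + Z) · ∫ (p1 − p0)²/(p0 + p1)`. -/
theorem vanilla_arithmetic_path_exponential_error_core {D : ℕ}
    (p0 p1 : EuclideanSpace ℝ (Fin D) → ℝ)
    (hp0m : Measurable p0) (hp1m : Measurable p1)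
    (hp0pos : ∀ x, 0 < p0 x) (hp1pos : ∀ x, 0 < p1 x)
    (hp0int : ∫ x, p0 x = 1) (hp1int : ∫ x, p1 x = 1)
    (Z : ℝ) (hZ : 0 < Z) :
    ENNReal.ofReal (1 / 3 * (Z⁻¹ + 1 + Z)) *
        ∫⁻ x, ENNReal.ofReal ((p1 x - p0 x) ^ 2 / (p0 x + p1 x)) ≤
      ∫⁻ t in Set.Ioc (0 : ℝ) 1,
        ENNReal.ofReal ((Z / ((1 - t) + t * Z) ^ 2) ^ 2) *
          ∫⁻ x, ENNReal.ofReal ((p1 x - p0 x) ^ 2 /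
            ((1 - t * Z / ((1 - t) + t * Z)) * p0 x + t * Z / ((1 - t) + t * Z) * p1 x)) :=
  vanilla_arithmetic_path_exponential_error_core_general p0 p1 hp0pos hp1pos Z hZ
end

section
/- Let p0 and p1 be strictly positive probability densities on ℝ^D. Then, as an identity of (possibly infinite) Lebesgue integrals of nonnegative functions, ∫_{ℝ^D} ∫₀¹ (p1(x) − p0(x))² / ((1−t) p0(x) + t p1(x)) dt dx = ∫_{ℝ^D} (p1(x) − p0(x)) (log p1(x) − log p0(x)) dx. In particular, the Fisher–Rao path length of the mixture path p_t = (1−t)p0 + t p1 equals the symmetrized Kullback–Leibler (Jeffreys) divergence D_KL(p1,p0) + D_KL(p0,p1). -/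
/-!
For fixed `x`, write `p_t = (1 - t) p0 + t p1`. Since `∂ₜ p_t = p1 - p0`, the map
`t ↦ (p1 - p0) log p_t` has derivative `(p1 - p0)² / p_t`, so by the fundamental theorem of
calculus the inner integral over `t` equals `(p1 - p0)(log p1 - log p0)` pointwise in `x`.
-/

open MeasureTheory Set

section Mixture

variable {a b t : ℝ}

lemma one_sub_mul_add_mul_pos (ha : 0 < a) (hb : 0 < b) (ht : t ∈ Icc (0 : ℝ) 1) :
    0 < (1 - t) * a + t * b :=
  convex_Ioi (0 : ℝ) ha hb (sub_nonneg.2 ht.2) ht.1 (sub_add_cancel 1 t)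

lemma hasDerivAt_mul_log_one_sub_mul_add_mul (h : (1 - t) * a + t * b ≠ 0) :
    HasDerivAt (fun s => (b - a) * Real.log ((1 - s) * a + s * b))
      ((b - a) ^ 2 / ((1 - t) * a + t * b)) t := by
  have hlin : HasDerivAt (fun s => (1 - s) * a + s * b) (b - a) t :=
    ((((hasDerivAt_id' t).const_sub 1).mul_const a).add
      ((hasDerivAt_id' t).mul_const b)).congr_deriv (by ring)
  exact ((hlin.log h).const_mul (b - a)).congr_deriv (by ring)

lemma continuousOn_sq_sub_div_one_sub_mul_add_mul (ha : 0 < a) (hb : 0 < b) :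
    ContinuousOn (fun t => (b - a) ^ 2 / ((1 - t) * a + t * b)) (Icc 0 1) :=
  continuousOn_const.div (by fun_prop) fun t ht => (one_sub_mul_add_mul_pos ha hb ht).ne'

lemma integral_sq_sub_div_one_sub_mul_add_mul (ha : 0 < a) (hb : 0 < b) :
    ∫ t in (0 : ℝ)..1, (b - a) ^ 2 / ((1 - t) * a + t * b) =
      (b - a) * (Real.log b - Real.log a) := by
  have hpos : ∀ t ∈ uIcc (0 : ℝ) 1, 0 < (1 - t) * a + t * b := fun t ht =>
    one_sub_mul_add_mul_pos ha hb (uIcc_of_le (zero_le_one' ℝ) ▸ ht)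
  rw [intervalIntegral.integral_eq_sub_of_hasDerivAt
    (fun t ht => hasDerivAt_mul_log_one_sub_mul_add_mul (hpos t ht).ne')
    ((continuousOn_sq_sub_div_one_sub_mul_add_mul ha hb).intervalIntegrable_of_Icc
      zero_le_one)]
  simp only [sub_self, zero_mul, zero_add, one_mul, add_zero, sub_zero, mul_sub]

lemma lintegral_sq_sub_div_one_sub_mul_add_mul (ha : 0 < a) (hb : 0 < b) :
    ∫⁻ t in Ioc (0 : ℝ) 1, ENNReal.ofReal ((b - a) ^ 2 / ((1 - t) * a + t * b)) =
      ENNReal.ofReal ((b - a) * (Real.log b - Real.log a)) := by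
  have hint : IntegrableOn (fun t => (b - a) ^ 2 / ((1 - t) * a + t * b)) (Ioc 0 1) :=
    (intervalIntegrable_iff_integrableOn_Ioc_of_le zero_le_one).1
      ((continuousOn_sq_sub_div_one_sub_mul_add_mul ha hb).intervalIntegrable_of_Icc
        zero_le_one)
  have hnonneg : 0 ≤ᵐ[volume.restrict (Ioc (0 : ℝ) 1)]
      fun t => (b - a) ^ 2 / ((1 - t) * a + t * b) := by
    filter_upwards [ae_restrict_mem measurableSet_Ioc] with t ht
    exact div_nonneg (sq_nonneg _) (one_sub_mul_add_mul_pos ha hb (Ioc_subset_Icc_self ht)).le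
  rw [← ofReal_integral_eq_lintegral_ofReal hint hnonneg,
    ← intervalIntegral.integral_of_le zero_le_one,
    integral_sq_sub_div_one_sub_mul_add_mul ha hb]

end Mixture

theorem mixture_path_length_eq_jeffreys_divergence_general {D : ℕ}
    (p0 p1 : EuclideanSpace ℝ (Fin D) → ℝ)
    (hp0pos : ∀ x, 0 < p0 x) (hp1pos : ∀ x, 0 < p1 x) :
    ∫⁻ x, ∫⁻ t in Set.Ioc (0 : ℝ) 1,
        ENNReal.ofReal ((p1 x - p0 x) ^ 2 / ((1 - t) * p0 x + t * p1 x)) =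
      ∫⁻ x, ENNReal.ofReal ((p1 x - p0 x) * (Real.log (p1 x) - Real.log (p0 x))) :=
  lintegral_congr fun x => lintegral_sq_sub_div_one_sub_mul_add_mul (hp0pos x) (hp1pos x)

/-- The Fisher–Rao path length of the mixture path `p_t = (1−t)p0 + t p1` equals
the symmetrized Kullback–Leibler (Jeffreys) divergence: as an identity of
(possibly infinite) Lebesgue integrals of nonnegative functions,
`∫ ∫₀¹ (p1 − p0)²/((1−t)p0 + t p1) dt dx = ∫ (p1 − p0)(log p1 − log p0) dx`. -/
theorem mixture_path_length_eq_jeffreys_divergence {D : ℕ}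
    (p0 p1 : EuclideanSpace ℝ (Fin D) → ℝ)
    (hp0m : Measurable p0) (hp1m : Measurable p1)
    (hp0pos : ∀ x, 0 < p0 x) (hp1pos : ∀ x, 0 < p1 x)
    (hp0int : ∫ x, p0 x = 1) (hp1int : ∫ x, p1 x = 1) :
    ∫⁻ x, ∫⁻ t in Set.Ioc (0 : ℝ) 1,
        ENNReal.ofReal ((p1 x - p0 x) ^ 2 / ((1 - t) * p0 x + t * p1 x)) =
      ∫⁻ x, ENNReal.ofReal ((p1 x - p0 x) * (Real.log (p1 x) - Real.log (p0 x))) :=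
  mixture_path_length_eq_jeffreys_divergence_general p0 p1 hp0pos hp1pos
end

section
/- (Normalization of the Gelman–Meng optimal path.) Let α ∈ (0, π/4], and for t ∈ [0,1] define a_t = cos((2t−1)α)/(2 cos α) − sin((2t−1)α)/(2 sin α) and b_t = cos((2t−1)α)/(2 cos α) + sin((2t−1)α)/(2 sin α). Let p0 and p1 be probability densities on ℝ^D whose Hellinger affinity satisfies ∫ √(p0(x) p1(x)) dx = cos(2α). Then for every t ∈ [0,1], the function x ↦ (a_t √(p0(x)) + b_t √(p1(x)))² is a probability density: ∫ (a_t √(p0(x)) + b_t √(p1(x)))² dx = 1. -/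
open MeasureTheory Real

/-! Expanding the square, `∫ (a √p₀ + b √p₁)² = a² + b² + 2ab ∫ √(p₀ p₁) = a² + b² + 2ab cos 2α`.
Writing `a = c - d`, `b = c + d` with `c = cos θ / (2 cos α)`, `d = sin θ / (2 sin α)`, this is
`4c² cos² α + 4d² sin² α = cos² θ + sin² θ = 1`. -/

section Integrals

variable {Ω : Type*} [MeasurableSpace Ω] {μ : Measure Ω} {f g : Ω → ℝ}

lemma sqrt_mul_le_half_add {x y : ℝ} (hx : 0 ≤ x) (hy : 0 ≤ y) : √(x * y) ≤ (x + y) / 2 :=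
  Real.sqrt_le_iff.mpr ⟨by linarith, by nlinarith [sq_nonneg (x - y)]⟩

lemma MeasureTheory.Integrable.sqrt_mul (hf : Integrable f μ) (hg : Integrable g μ)
    (hf₀ : 0 ≤ᵐ[μ] f) (hg₀ : 0 ≤ᵐ[μ] g) : Integrable (fun x ↦ √(f x * g x)) μ := by
  refine ((hf.add hg).div_const 2).mono'
    (continuous_sqrt.comp_aestronglyMeasurable (hf.1.mul hg.1)) ?_
  filter_upwards [hf₀, hg₀] with x hfx hgx
  rw [Real.norm_of_nonneg (Real.sqrt_nonneg _)]
  exact sqrt_mul_le_half_add hfx hgx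

lemma integral_mul_sqrt_add_mul_sqrt_sq (hf : Integrable f μ) (hg : Integrable g μ)
    (hf₀ : 0 ≤ᵐ[μ] f) (hg₀ : 0 ≤ᵐ[μ] g) (a b : ℝ) :
    ∫ x, (a * √(f x) + b * √(g x)) ^ 2 ∂μ =
      a ^ 2 * ∫ x, f x ∂μ + b ^ 2 * ∫ x, g x ∂μ + 2 * a * b * ∫ x, √(f x * g x) ∂μ := by
  have hexpand : (fun x ↦ (a * √(f x) + b * √(g x)) ^ 2) =ᵐ[μ]
      fun x ↦ a ^ 2 * f x + b ^ 2 * g x + 2 * a * b * √(f x * g x) := by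
    filter_upwards [hf₀, hg₀] with x hfx hgx
    rw [Real.sqrt_mul hfx]
    linear_combination a ^ 2 * Real.sq_sqrt hfx + b ^ 2 * Real.sq_sqrt hgx
  have hfg : Integrable (fun x ↦ a ^ 2 * f x + b ^ 2 * g x) μ :=
    (hf.const_mul _).add (hg.const_mul _)
  rw [integral_congr_ae hexpand, integral_add hfg ((hf.sqrt_mul hg hf₀ hg₀).const_mul _),
    integral_add (hf.const_mul _) (hg.const_mul _), integral_const_mul, integral_const_mul,
    integral_const_mul]

end Integrals

lemma gelmanMeng_coeffs_quadratic_form_eq_one (θ α : ℝ) (hsin : sin α ≠ 0) (hcos : cos α ≠ 0) :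
    (cos θ / (2 * cos α) - sin θ / (2 * sin α)) ^ 2 +
      (cos θ / (2 * cos α) + sin θ / (2 * sin α)) ^ 2 +
      2 * (cos θ / (2 * cos α) - sin θ / (2 * sin α)) *
        (cos θ / (2 * cos α) + sin θ / (2 * sin α)) * cos (2 * α) = 1 := by
  rw [cos_two_mul]
  field_simp
  linear_combination 4 * sin α ^ 2 * cos α ^ 2 * sin_sq_add_cos_sq θ -
    4 * cos α ^ 2 * sin θ ^ 2 * sin_sq_add_cos_sq α

theorem gelman_meng_optimal_path_is_normalized_general {D : ℕ}
    (α : ℝ) (hα : α ∈ Set.Ioc (0 : ℝ) (Real.pi / 4))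
    (p0 p1 : EuclideanSpace ℝ (Fin D) → ℝ)
    (hp0nn : ∀ x, 0 ≤ p0 x) (hp1nn : ∀ x, 0 ≤ p1 x)
    (hp0int : ∫ x, p0 x = 1) (hp1int : ∫ x, p1 x = 1)
    (haff : ∫ x, Real.sqrt (p0 x * p1 x) = Real.cos (2 * α)) :
    ∀ t ∈ Set.Icc (0 : ℝ) 1,
      ∫ x, ((Real.cos ((2 * t - 1) * α) / (2 * Real.cos α) -
              Real.sin ((2 * t - 1) * α) / (2 * Real.sin α)) * Real.sqrt (p0 x) +
            (Real.cos ((2 * t - 1) * α) / (2 * Real.cos α) +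
              Real.sin ((2 * t - 1) * α) / (2 * Real.sin α)) * Real.sqrt (p1 x)) ^ 2 = 1 := by
  intro t _
  obtain ⟨hα₀, hα₁⟩ := hα
  have hsin : sin α ≠ 0 := (sin_pos_of_pos_of_lt_pi hα₀ (by linarith [pi_pos])).ne'
  have hcos : cos α ≠ 0 := (cos_pos_of_mem_Ioo ⟨by linarith, by linarith [pi_pos]⟩).ne'
  have hp0 : Integrable p0 := .of_integral_ne_zero (by simp [hp0int])
  have hp1 : Integrable p1 := .of_integral_ne_zero (by simp [hp1int])
  rw [integral_mul_sqrt_add_mul_sqrt_sq hp0 hp1 (.of_forall hp0nn) (.of_forall hp1nn),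
    hp0int, hp1int, haff, mul_one, mul_one]
  exact gelmanMeng_coeffs_quadratic_form_eq_one _ α hsin hcos

/-- Normalization of the Gelman–Meng optimal path: if `p0, p1` are probability
densities with Hellinger affinity `∫ √(p0 p1) = cos(2α)` for some `α ∈ (0, π/4]`,
then for every `t ∈ [0,1]` the function `x ↦ (a_t √(p0 x) + b_t √(p1 x))²`, with
`a_t = cos((2t−1)α)/(2cos α) − sin((2t−1)α)/(2sin α)` and
`b_t = cos((2t−1)α)/(2cos α) + sin((2t−1)α)/(2sin α)`, is a probability density. -/
theorem gelman_meng_optimal_path_is_normalized {D : ℕ}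
    (α : ℝ) (hα : α ∈ Set.Ioc (0 : ℝ) (Real.pi / 4))
    (p0 p1 : EuclideanSpace ℝ (Fin D) → ℝ)
    (hp0m : Measurable p0) (hp1m : Measurable p1)
    (hp0nn : ∀ x, 0 ≤ p0 x) (hp1nn : ∀ x, 0 ≤ p1 x)
    (hp0int : ∫ x, p0 x = 1) (hp1int : ∫ x, p1 x = 1)
    (haff : ∫ x, Real.sqrt (p0 x * p1 x) = Real.cos (2 * α)) :
    ∀ t ∈ Set.Icc (0 : ℝ) 1,
      ∫ x, ((Real.cos ((2 * t - 1) * α) / (2 * Real.cos α) -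
              Real.sin ((2 * t - 1) * α) / (2 * Real.sin α)) * Real.sqrt (p0 x) +
            (Real.cos ((2 * t - 1) * α) / (2 * Real.cos α) +
              Real.sin ((2 * t - 1) * α) / (2 * Real.sin α)) * Real.sqrt (p1 x)) ^ 2 = 1 :=
  gelman_meng_optimal_path_is_normalized_general α hα p0 p1 hp0nn hp1nn hp0int hp1int haff
end
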